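/- arXiv:2503.08186 — 2 statements merged into one kernel-verified Lean document; each statement's English description precedes it below -/
import Mathlib

section
/- Let q : [0, T] → (0, ∞) be differentiable and satisfy q'(t) ≥ (4/d)(C − q(t)) for all t ∈ [0, T], where C > 0 and d > 0 are constants, and q(0) ≥ 0. Then q(t) ≥ C (4/d) t e^{−(4/d)t} for all t ∈ [0, T]. -/
/-- ODE comparison lemma: if `q' ≥ (4/d)(C − q)` on `[0, T]` with `q > 0` and `q(0) ≥ 0`,
then `q(t) ≥ C (4/d) t e^{−(4/d)t}` on `[0, T]`. -/
theorem stmt4 (T C d : ℝ) (hT : 0 ≤ T) (hC : 0 < C) (hd : 0 < d)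
    (q q' : ℝ → ℝ)
    (hderiv : ∀ t ∈ Set.Icc (0 : ℝ) T, HasDerivAt q (q' t) t)
    (hpos : ∀ t ∈ Set.Icc (0 : ℝ) T, 0 < q t)
    (hq' : ∀ t ∈ Set.Icc (0 : ℝ) T, (4 / d) * (C - q t) ≤ q' t)
    (h0 : 0 ≤ q 0) :
    ∀ t ∈ Set.Icc (0 : ℝ) T, C * (4 / d) * t * Real.exp (-(4 / d) * t) ≤ q t := by
  set a : ℝ := 4 / d with ha_def
  have ha : 0 < a := by positivity
  set g : ℝ → ℝ := fun t => Real.exp (a * t) * q t - C * a * t with hg_def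
  have hg : ∀ t ∈ Set.Icc (0 : ℝ) T,
      HasDerivAt g (Real.exp (a * t) * a * q t + Real.exp (a * t) * q' t - C * a) t := by
    intro t ht
    have h1 : HasDerivAt (fun t : ℝ => Real.exp (a * t)) (Real.exp (a * t) * a) t := by
      simpa using ((hasDerivAt_id t).const_mul a).exp
    have h2 := (h1.mul (hderiv t ht)).sub (((hasDerivAt_id t).const_mul (C * a)))
    refine h2.congr_deriv ?_
    ring
  have hmono : MonotoneOn g (Set.Icc 0 T) := by
    apply monotoneOn_of_deriv_nonneg (convex_Icc 0 T)
    · exact fun t ht => (hg t ht).continuousAt.continuousWithinAt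
    · intro t ht
      rw [interior_Icc] at ht
      exact (hg t ⟨le_of_lt ht.1, le_of_lt ht.2⟩).differentiableAt.differentiableWithinAt
    · intro t ht
      rw [interior_Icc] at ht
      have ht' : t ∈ Set.Icc (0 : ℝ) T := ⟨le_of_lt ht.1, le_of_lt ht.2⟩
      rw [(hg t ht').deriv]
      have h1 := hq' t ht'
      have h2 : (1 : ℝ) ≤ Real.exp (a * t) := Real.one_le_exp (mul_nonneg ha.le ht'.1)
      have h3 : 0 < Real.exp (a * t) := Real.exp_pos _
      nlinarith [mul_le_mul_of_nonneg_left h1 h3.le,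
        mul_le_mul_of_nonneg_right h2 (mul_pos ha hC).le]
  intro t ht
  have hle : g 0 ≤ g t := hmono ⟨le_refl 0, hT⟩ ht ht.1
  have hg0 : g 0 = q 0 := by simp [hg_def]
  have hgt : C * a * t ≤ Real.exp (a * t) * q t := by
    have : 0 ≤ g t := le_trans (hg0 ▸ h0) hle
    simp only [hg_def] at this
    linarith
  have hexp : Real.exp (-a * t) * Real.exp (a * t) = 1 := by
    rw [← Real.exp_add]; ring_nf; exact Real.exp_zero
  have h3 : 0 < Real.exp (-a * t) := Real.exp_pos _
  have key : Real.exp (a * t) * Real.exp (-a * t) = 1 := by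
    rw [← Real.exp_add]; ring_nf; exact Real.exp_zero
  calc C * a * t * Real.exp (-a * t)
      ≤ (Real.exp (a * t) * q t) * Real.exp (-a * t) := mul_le_mul_of_nonneg_right hgt h3.le
    _ = q t := by linear_combination (q t) * key
end

section
/- Let B ⊂ ℝ^d be as above (contained in B_d(x₀, R) and star-shaped with core B_d(x̂₀, R/4) ⊂ B), let χ_R be the rescaled mollifier supported in B_d(0, R/4), and let u ≥ 0, w be such that u ≤ Δw in the distributional sense on B, with w ∈ L^∞(B). Then the average ū = ∫ χ_R(x) u(x̂₀ − x) dx satisfies ‖ū‖_{L^q(B)} ≤ C_d^{1/q} R^{d/q − 2} ‖Δχ‖_{L¹(ℝ^d)} ‖w‖_{L^∞(B)} for every q ∈ [1, ∞). -/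
open MeasureTheory

/-- The Laplacian, as the sum of the second derivatives along the coordinate
directions. -/
noncomputable def lap {d : ℕ} (w : EuclideanSpace ℝ (Fin d) → ℝ)
    (x : EuclideanSpace ℝ (Fin d)) : ℝ :=
  ∑ i, iteratedFDeriv ℝ 2 w x ![EuclideanSpace.single i 1, EuclideanSpace.single i 1]

lemma lap_smul_comp_affine {d : ℕ} (f : EuclideanSpace ℝ (Fin d) → ℝ)
    (hf : ContDiff ℝ (⊤ : ℕ∞) f) (c r : ℝ) (b x : EuclideanSpace ℝ (Fin d)) :
    lap (fun y => c * f (b + r • y)) x = (c * r ^ 2) * lap f (b + r • x) := by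
  have hg : ∀ y : EuclideanSpace ℝ (Fin d), HasFDerivAt (fun y : EuclideanSpace ℝ (Fin d) => b + r • y)
      (r • ContinuousLinearMap.id ℝ (EuclideanSpace ℝ (Fin d))) y := fun y =>
    ((hasFDerivAt_id y).const_smul r).const_add b
  have hfd : Differentiable ℝ f := hf.differentiable (by simp)
  have hF : ContDiff ℝ (⊤ : ℕ∞) (fderiv ℝ f) := hf.fderiv_right (by simp)
  have hFd : Differentiable ℝ (fderiv ℝ f) := hF.differentiable (by simp)
  have h1 : ∀ y : EuclideanSpace ℝ (Fin d), HasFDerivAt (fun y => c * f (b + r • y))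
      ((c * r) • fderiv ℝ f (b + r • y)) y := by
    intro y
    have h := ((hfd (b + r • y)).hasFDerivAt.comp y (hg y)).const_mul c
    refine h.congr_fderiv ?_
    ext v
    simp [mul_comm, mul_assoc, mul_left_comm]
  have h2 : fderiv ℝ (fun y => c * f (b + r • y)) = fun y =>
      (c * r) • fderiv ℝ f (b + r • y) := funext fun y => (h1 y).fderiv
  have h3 : HasFDerivAt (fun y => (c * r) • fderiv ℝ f (b + r • y))
      ((c * r) • ((fderiv ℝ (fderiv ℝ f) (b + r • x)).comp
        (r • ContinuousLinearMap.id ℝ (EuclideanSpace ℝ (Fin d))))) x :=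
    (((hFd (b + r • x)).hasFDerivAt.comp x (hg x))).const_smul (c * r)
  unfold lap
  rw [Finset.mul_sum]
  refine Finset.sum_congr rfl fun i _ => ?_
  rw [iteratedFDeriv_two_apply, iteratedFDeriv_two_apply, h2, h3.fderiv]
  simp [ContinuousLinearMap.smul_apply, ContinuousLinearMap.comp_apply, _root_.map_smul, smul_eq_mul]
  ring

lemma lap_continuous {d : ℕ} (f : EuclideanSpace ℝ (Fin d) → ℝ) (hf : ContDiff ℝ (⊤ : ℕ∞) f) :
    Continuous (lap f) := by
  unfold lap
  refine continuous_finset_sum _ fun i _ => ?_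
  exact (continuous_eval_const _).comp (hf.continuous_iteratedFDeriv (m := 2) (WithTop.coe_le_coe.mpr le_top))

lemma lap_eq_zero_of_not_mem {d : ℕ} (f : EuclideanSpace ℝ (Fin d) → ℝ)
    {x : EuclideanSpace ℝ (Fin d)} (hx : x ∉ tsupport f) : lap f x = 0 := by
  have h : iteratedFDeriv ℝ 2 f x = 0 := by
    by_contra h
    exact hx (support_iteratedFDeriv_subset 2 h)
  unfold lap
  simp [h]

/-- Key step of the one-sided interpolation estimate: if `0 ≤ u ≤ Δw`
distributionally on `B` and `|w| ≤ W` a.e. on `B`, then the mollified average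
`ū = ∫ χ_R(x) u(x̂₀ − x) dx` satisfies
`‖ū‖_{L^q(B)} ≤ c_d^{1/q} R^{d/q − 2} ‖Δχ‖_{L¹} W`. -/
theorem stmt18 (d : ℕ) (hd : 1 ≤ d) (q : ℝ) (hq : 1 ≤ q)
    (R : ℝ) (hR : 0 < R) (x₀ xh : EuclideanSpace ℝ (Fin d))
    (B : Set (EuclideanSpace ℝ (Fin d)))
    (χ u w : EuclideanSpace ℝ (Fin d) → ℝ)
    (hBo : IsOpen B) (hBm : MeasurableSet B)
    (hcore : Metric.ball xh (R / 4) ⊆ B) (hBsub : B ⊆ Metric.ball x₀ R)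
    (hstar : ∀ y ∈ B, ∀ z ∈ Metric.ball xh (R / 4), ∀ s ∈ Set.Icc (0 : ℝ) 1,
      y + s • (z - y) ∈ B)
    (hχ : ContDiff ℝ (⊤ : ℕ∞) χ) (hχ0 : ∀ x, 0 ≤ χ x)
    (hχsupp : tsupport χ ⊆ Metric.ball 0 (1 / 4)) (hχint : (∫ x, χ x) = 1)
    (hu0 : ∀ x ∈ B, 0 ≤ u x) (huint : IntegrableOn u B)
    (hwm : AEStronglyMeasurable w (volume.restrict B))
    (hdist : ∀ ψ : EuclideanSpace ℝ (Fin d) → ℝ,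
      ContDiff ℝ (⊤ : ℕ∞) ψ → (∀ x, 0 ≤ ψ x) → tsupport ψ ⊆ B →
      (∫ x in B, u x * ψ x) ≤ ∫ x in B, w x * lap ψ x)
    (W : ℝ) (hW : ∀ᵐ x ∂(volume.restrict B), |w x| ≤ W) :
    (∫ x in B,
        |∫ z, (R ^ (-(d : ℝ)) * χ (R⁻¹ • z)) * u (xh - z)| ^ q) ^ (1 / q)
      ≤ ((volume (Metric.ball (0 : EuclideanSpace ℝ (Fin d)) 1)).toReal) ^ (1 / q)
          * R ^ ((d : ℝ) / q - 2) * (∫ x, |lap χ x|) * W := by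
  have hq0 : (0:ℝ) < q := lt_of_lt_of_le one_pos hq
  haveI : Nonempty (Fin d) := ⟨⟨0, hd⟩⟩
  set c : ℝ := R ^ (-(d : ℝ)) with hc_def
  have hc_eq : c = (R ^ d)⁻¹ := by
    rw [hc_def, Real.rpow_neg hR.le, Real.rpow_natCast]
  have hc0 : 0 < c := by rw [hc_eq]; positivity
  set b : EuclideanSpace ℝ (Fin d) := R⁻¹ • xh with hb_def
  set r : ℝ := -R⁻¹ with hr_def
  have hgx : ∀ x : EuclideanSpace ℝ (Fin d), R⁻¹ • (xh - x) = b + r • x := by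
    intro x
    rw [hb_def, hr_def, smul_sub, sub_eq_add_neg, neg_smul]
  set ψ : EuclideanSpace ℝ (Fin d) → ℝ := fun x => c * χ (R⁻¹ • (xh - x)) with hψ_def
  have hψsmooth : ContDiff ℝ (⊤ : ℕ∞) ψ := by
    apply ContDiff.mul contDiff_const
    exact hχ.comp ((contDiff_const.sub contDiff_id).const_smul R⁻¹)
  have hψ0 : ∀ x, 0 ≤ ψ x := fun x => mul_nonneg hc0.le (hχ0 _)
  have hball : ∀ x : EuclideanSpace ℝ (Fin d),
      R⁻¹ • (xh - x) ∈ Metric.ball (0 : EuclideanSpace ℝ (Fin d)) (1/4) →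
      x ∈ Metric.ball xh (R/4) := by
    intro x hx
    rw [Metric.mem_ball, dist_zero_right, norm_smul, Real.norm_eq_abs, abs_inv,
      abs_of_pos hR] at hx
    rw [Metric.mem_ball, dist_eq_norm, ← norm_sub_rev]
    calc ‖xh - x‖ = R * (R⁻¹ * ‖xh - x‖) := by field_simp
    _ < R * (1/4) := mul_lt_mul_of_pos_left hx hR
    _ = R / 4 := by ring
  have hψball : Function.support ψ ⊆ Metric.ball xh (R/4) := by
    intro x hx
    have h0 : χ (R⁻¹ • (xh - x)) ≠ 0 := by
      intro h0
      apply hx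
      simp [hψ_def, h0]
    exact hball x (hχsupp (subset_closure h0))
  have hψsupp : tsupport ψ ⊆ B := by
    have hclosed : IsClosed ((fun x : EuclideanSpace ℝ (Fin d) => R⁻¹ • (xh - x)) ⁻¹'
        (tsupport χ)) := (isClosed_tsupport χ).preimage (by fun_prop)
    have hsub : Function.support ψ ⊆ (fun x : EuclideanSpace ℝ (Fin d) => R⁻¹ • (xh - x)) ⁻¹'
        (tsupport χ) := by
      intro x hx
      have h0 : χ (R⁻¹ • (xh - x)) ≠ 0 := by
        intro h0
        apply hx
        simp [hψ_def, h0]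
      exact subset_closure h0
    refine (closure_minimal hsub hclosed).trans ?_
    intro x hx
    exact hcore (hball x (hχsupp hx))
  -- Laplacian of ψ
  have hψaff : ψ = fun y => c * χ (b + r • y) := funext fun y => by
    show c * χ (R⁻¹ • (xh - y)) = _
    rw [hgx]
  have hlapψ : ∀ x, lap ψ x = (c * r ^ 2) * lap χ (b + r • x) := by
    intro x
    rw [hψaff, lap_smul_comp_affine χ hχ c r b x]
  have hcr : c * r ^ 2 = c * (R ^ 2)⁻¹ := by rw [hr_def]; ring
  have hlapχcont : Continuous (lap χ) := lap_continuous χ hχ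
  have hlapχcs : HasCompactSupport (lap χ) := by
    apply HasCompactSupport.intro (isCompact_closedBall (0 : EuclideanSpace ℝ (Fin d)) (1/4))
    intro x hx
    apply lap_eq_zero_of_not_mem
    intro hmem
    exact hx (Metric.ball_subset_closedBall (hχsupp hmem))
  have hlapχint : Integrable (lap χ) := hlapχcont.integrable_of_hasCompactSupport hlapχcs
  have hrd : |((r : ℝ) ^ (Module.finrank ℝ (EuclideanSpace ℝ (Fin d))))⁻¹| = R ^ d := by
    rw [finrank_euclideanSpace_fin, hr_def, abs_inv, abs_pow, abs_neg, abs_inv,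
      abs_of_pos hR, inv_pow, inv_inv]
  have habs_comp : (∫ x, |lap χ (b + r • x)|) = R ^ d * ∫ x, |lap χ x| := by
    have h1 : (∫ x, |lap χ (b + r • x)|)
        = ∫ x : EuclideanSpace ℝ (Fin d), (fun y => |lap χ (b + y)|) (r • x) := rfl
    rw [h1, MeasureTheory.Measure.integral_comp_smul volume (fun y => |lap χ (b + y)|) r, hrd,
      smul_eq_mul, integral_add_left_eq_self (fun y => |lap χ y|) b]
  have hintlapψabs : (∫ x, |lap ψ x|) = (R ^ 2)⁻¹ * ∫ x, |lap χ x| := by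
    have h1 : ∀ x, |lap ψ x| = (c * (R ^ 2)⁻¹) * |lap χ (b + r • x)| := by
      intro x
      rw [hlapψ, hcr, abs_mul, abs_of_nonneg (by positivity)]
    simp_rw [h1]
    rw [integral_const_mul, habs_comp, hc_eq]
    field_simp
  -- integrability of lap ψ
  have hψcs : HasCompactSupport ψ := by
    apply HasCompactSupport.intro (isCompact_closedBall xh (R/4))
    intro x hx
    by_contra h
    exact hx (Metric.ball_subset_closedBall (hψball h))
  have hlapψcs : HasCompactSupport (lap ψ) := by
    apply IsCompact.of_isClosed_subset hψcs (isClosed_closure)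
    apply closure_minimal _ (isClosed_tsupport ψ)
    intro x hx
    by_contra hmem
    exact hx (lap_eq_zero_of_not_mem ψ hmem)
  have hlapψint : Integrable (lap ψ) :=
    (lap_continuous ψ hψsmooth).integrable_of_hasCompactSupport hlapψcs
  set I : ℝ := ∫ x, |lap χ x| with hI_def
  have hI0 : 0 ≤ I := integral_nonneg fun x => abs_nonneg _
  have hBvol : volume B ≠ 0 := by
    have h1 : 0 < volume (Metric.ball xh (R/4)) := Metric.measure_ball_pos volume xh (by positivity : (0:ℝ) < R/4)
    exact (lt_of_lt_of_le h1 (measure_mono hcore)).ne'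
  have hWnn : 0 ≤ W := by
    have hne : volume.restrict B ≠ 0 := by
      rw [Ne, Measure.restrict_eq_zero]
      exact hBvol
    haveI : (ae (volume.restrict B)).NeBot := ae_neBot.mpr hne
    obtain ⟨x, hx⟩ := hW.exists
    exact (abs_nonneg _).trans hx
  have hUnn : 0 ≤ ∫ z, (c * χ (R⁻¹ • z)) * u (xh - z) := by
    apply integral_nonneg
    intro z
    by_cases hz : χ (R⁻¹ • z) = 0
    · simp [hz]
    · have hmem : R⁻¹ • z ∈ Metric.ball (0 : EuclideanSpace ℝ (Fin d)) (1/4) :=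
        hχsupp (subset_closure hz)
      have h2 : R⁻¹ • (xh - (xh - z)) = R⁻¹ • z := by rw [sub_sub_cancel]
      have h3 : xh - z ∈ B := hcore (hball (xh - z) (by rw [h2]; exact hmem))
      exact mul_nonneg (mul_nonneg hc0.le (hχ0 _)) (hu0 _ h3)
  have hψzero : ∀ x ∉ B, u x * ψ x = 0 := by
    intro x hx
    have h0 : ψ x = 0 := by
      by_contra h
      exact hx (hψsupp (subset_closure h))
    rw [h0, mul_zero]
  have hkey : (∫ z, (c * χ (R⁻¹ • z)) * u (xh - z)) = ∫ x in B, u x * ψ x := by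
    calc (∫ z, (c * χ (R⁻¹ • z)) * u (xh - z))
        = ∫ x, (fun z => (c * χ (R⁻¹ • z)) * u (xh - z)) (xh - x) :=
          (integral_sub_left_eq_self (fun z => (c * χ (R⁻¹ • z)) * u (xh - z)) volume xh).symm
      _ = ∫ x, u x * ψ x := by
          congr 1
          funext x
          show (c * χ (R⁻¹ • (xh - x))) * u (xh - (xh - x)) = u x * ψ x
          rw [sub_sub_cancel]
          show _ = u x * (c * χ (R⁻¹ • (xh - x)))
          ring
      _ = ∫ x in B, u x * ψ x :=
          (setIntegral_eq_integral_of_forall_compl_eq_zero hψzero).symm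
  have hwla : IntegrableOn (fun x => w x * lap ψ x) B := by
    apply Integrable.mono' ((hlapψint.abs.const_mul W).integrableOn)
    · exact hwm.mul ((lap_continuous ψ hψsmooth).aestronglyMeasurable.restrict)
    · filter_upwards [hW] with x hx
      rw [Real.norm_eq_abs, abs_mul]
      exact mul_le_mul_of_nonneg_right hx (abs_nonneg _)
  have hstep2 : (∫ x in B, w x * lap ψ x) ≤ (R ^ 2)⁻¹ * I * W := by
    calc (∫ x in B, w x * lap ψ x) ≤ ∫ x in B, W * |lap ψ x| := by
          apply integral_mono_ae hwla ((hlapψint.abs.const_mul W).integrableOn)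
          filter_upwards [hW] with x hx
          calc w x * lap ψ x ≤ |w x * lap ψ x| := le_abs_self _
            _ = |w x| * |lap ψ x| := abs_mul _ _
            _ ≤ W * |lap ψ x| := mul_le_mul_of_nonneg_right hx (abs_nonneg _)
      _ = W * ∫ x in B, |lap ψ x| := integral_const_mul W _
      _ ≤ W * ∫ x, |lap ψ x| := by
          refine mul_le_mul_of_nonneg_left ?_ hWnn
          exact setIntegral_le_integral hlapψint.abs
            (Filter.Eventually.of_forall fun x => abs_nonneg _)
      _ = W * ((R ^ 2)⁻¹ * I) := by rw [hintlapψabs]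
      _ = (R ^ 2)⁻¹ * I * W := by ring
  have hU_le : (∫ z, (c * χ (R⁻¹ • z)) * u (xh - z)) ≤ (R ^ 2)⁻¹ * I * W := by
    rw [hkey]
    exact le_trans (hdist ψ hψsmooth hψ0 hψsupp) hstep2
  set Cd : ℝ := (volume (Metric.ball (0 : EuclideanSpace ℝ (Fin d)) 1)).toReal with hCd_def
  have hCd0 : 0 ≤ Cd := ENNReal.toReal_nonneg
  haveI : Nontrivial (EuclideanSpace ℝ (Fin d)) := by
    refine ⟨⟨0, EuclideanSpace.single ⟨0, hd⟩ 1, fun h => ?_⟩⟩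
    have h2 := congrArg (fun f : EuclideanSpace ℝ (Fin d) => f ⟨0, hd⟩) h
    simp [EuclideanSpace.single_apply] at h2
  have hVB : (volume B).toReal ≤ R ^ d * Cd := by
    have h1 : volume B ≤ ENNReal.ofReal (R ^ d)
        * volume (Metric.ball (0 : EuclideanSpace ℝ (Fin d)) 1) := by
      refine le_trans (measure_mono hBsub) ?_
      rw [Measure.addHaar_ball volume x₀ hR.le, finrank_euclideanSpace_fin]
    have h2 := ENNReal.toReal_mono
      (ENNReal.mul_ne_top ENNReal.ofReal_ne_top measure_ball_lt_top.ne) h1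
    rwa [ENNReal.toReal_mul, ENNReal.toReal_ofReal (by positivity)] at h2
  set K : ℝ := (R ^ 2)⁻¹ * I * W with hK_def
  have hK0 : 0 ≤ K := mul_nonneg (mul_nonneg (by positivity) hI0) hWnn
  have habsU : |∫ z, (c * χ (R⁻¹ • z)) * u (xh - z)| ^ q ≤ K ^ q := by
    rw [abs_of_nonneg hUnn]
    exact Real.rpow_le_rpow hUnn hU_le hq0.le
  rw [setIntegral_const, smul_eq_mul]
  calc ((volume B).toReal * |∫ z, (c * χ (R⁻¹ • z)) * u (xh - z)| ^ q) ^ (1/q)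
      ≤ ((R ^ d * Cd) * K ^ q) ^ (1/q) := by
        apply Real.rpow_le_rpow
        · positivity
        · refine mul_le_mul hVB habsU (by positivity) (by positivity)
        · positivity
    _ = (R ^ d) ^ (1/q) * Cd ^ (1/q) * K := by
        rw [Real.mul_rpow (by positivity) (by positivity),
          Real.mul_rpow (by positivity) hCd0,
          ← Real.rpow_mul hK0, mul_one_div_cancel hq0.ne', Real.rpow_one]
    _ = Cd ^ (1/q) * R ^ ((d:ℝ)/q - 2) * I * W := by
        have hRd : ((R:ℝ) ^ d) ^ (1/q) = R ^ ((d:ℝ)/q) := by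
          rw [← Real.rpow_natCast R d, ← Real.rpow_mul hR.le, mul_one_div]
        rw [hRd, hK_def, Real.rpow_sub hR,
          show ((2:ℝ)) = ((2:ℕ):ℝ) by norm_num, Real.rpow_natCast]
        field_simp
end
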